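/- arXiv:1705.01363 — 3 statements merged into one kernel-verified Lean document; each statement's English description precedes it below -/
import Mathlib

section
/- Define the modified unitary Ramanujan sums c̃_q(n) = Σ_{d ∥ (n,q)_{**}} d · μ*(q/d). Then for all q, n ≥ 1, Σ_{d ∥ q} c̃_d(n) equals q if q ∥ n, and 0 if q is not a unitary divisor of n. -/
def uDivisors (n : ℕ) : Finset ℕ := n.divisors.filter (fun d => Nat.gcd d (n / d) = 1)

def mustar (n : ℕ) : ℤ := (-1) ^ n.primeFactors.card

def gcud (n q : ℕ) : ℕ := (uDivisors n ∩ uDivisors q).sup id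

/-- The modified unitary Ramanujan sum c̃_q(n). -/
def ctilde (q n : ℕ) : ℤ := ∑ d ∈ uDivisors (gcud n q), (d : ℤ) * mustar (q / d)

/-! Expanding `c̃_d(n)` over the common unitary divisors `e` of `n` and `d` and writing
`d = e f`, the sum becomes `∑_{e ∥ q, e ∥ n} e ∑_{f ∥ q/e} μ*(f)`. The unitary divisors of `m`
are the products `∏_{p ∈ S} p ^ vₚ(m)` over subsets `S` of the prime factors of `m`, and
`μ*` is the sign `(-1) ^ #S`, so the inner sum vanishes unless `q / e = 1`. -/

open Finset

theorem mem_uDivisors {d n : ℕ} : d ∈ uDivisors n ↔ d ∣ n ∧ d.Coprime (n / d) ∧ n ≠ 0 := by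
  simp only [uDivisors, mem_filter, Nat.mem_divisors, Nat.coprime_iff_gcd_eq_one]
  tauto

theorem mem_uDivisors_iff_exists_mul {d n : ℕ} :
    d ∈ uDivisors n ↔ n ≠ 0 ∧ ∃ m, n = d * m ∧ d.Coprime m := by
  rw [mem_uDivisors]
  constructor
  · rintro ⟨hdn, hcop, hn⟩
    exact ⟨hn, n / d, (Nat.mul_div_cancel' hdn).symm, hcop⟩
  · rintro ⟨hn, m, rfl, hcop⟩
    have hd : d ≠ 0 := left_ne_zero_of_mul hn
    rw [Nat.mul_div_cancel_left m (Nat.pos_of_ne_zero hd)]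
    exact ⟨dvd_mul_right d m, hcop, hn⟩

theorem mem_uDivisors_mul {a b : ℕ} (hab : a.Coprime b) (h : a * b ≠ 0) :
    a ∈ uDivisors (a * b) :=
  mem_uDivisors_iff_exists_mul.2 ⟨h, b, rfl, hab⟩

theorem pos_of_mem_uDivisors {d n : ℕ} (h : d ∈ uDivisors n) : 0 < d :=
  Nat.pos_of_mem_divisors (mem_filter.1 h).1

theorem one_mem_uDivisors {n : ℕ} (hn : n ≠ 0) : 1 ∈ uDivisors n := by
  simpa using mem_uDivisors_mul (Nat.coprime_one_left n) (by simpa using hn)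

theorem self_mem_uDivisors {n : ℕ} (hn : n ≠ 0) : n ∈ uDivisors n := by
  simpa using mem_uDivisors_mul (Nat.coprime_one_right n) (by simpa using hn)

theorem mem_uDivisors_trans {e d n : ℕ} (he : e ∈ uDivisors d) (hd : d ∈ uDivisors n) :
    e ∈ uDivisors n := by
  obtain ⟨-, a, rfl, hea⟩ := mem_uDivisors_iff_exists_mul.1 he
  obtain ⟨hn, b, rfl, hdb⟩ := mem_uDivisors_iff_exists_mul.1 hd
  rw [mul_assoc] at hn ⊢
  exact mem_uDivisors_mul (hea.mul_right (Nat.Coprime.coprime_mul_right hdb)) hn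

theorem mem_uDivisors_of_dvd {e g n : ℕ} (hdvd : e ∣ g) (he : e ∈ uDivisors n)
    (hg : g ∈ uDivisors n) : e ∈ uDivisors g := by
  obtain ⟨c, rfl⟩ := hdvd
  obtain ⟨hn, a, hna, hea⟩ := mem_uDivisors_iff_exists_mul.1 he
  obtain ⟨-, b, rfl, -⟩ := mem_uDivisors_iff_exists_mul.1 hg
  have hac : a = c * b := by
    rw [mul_assoc] at hna
    exact (Nat.eq_of_mul_eq_mul_left (pos_of_mem_uDivisors he) hna).symm
  exact mem_uDivisors_mul (Nat.Coprime.coprime_dvd_right ⟨b, hac⟩ hea)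
    (left_ne_zero_of_mul hn)

theorem lcm_mem_uDivisors {e g n : ℕ} (he : e ∈ uDivisors n) (hg : g ∈ uDivisors n) :
    e.lcm g ∈ uDivisors n := by
  obtain ⟨hen, hce, hn⟩ := mem_uDivisors.1 he
  obtain ⟨hgn, hcg, -⟩ := mem_uDivisors.1 hg
  have hLn : e.lcm g ∣ n := Nat.lcm_dvd hen hgn
  have hce' := hce.coprime_dvd_right (Nat.div_dvd_div_left hLn (Nat.dvd_lcm_left e g))
  have hcg' := hcg.coprime_dvd_right (Nat.div_dvd_div_left hLn (Nat.dvd_lcm_right e g))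
  exact mem_uDivisors.2 ⟨hLn, (hce'.mul_left hcg').coprime_dvd_left (Nat.lcm_dvd_mul e g), hn⟩

-- `gcud n q` is the maximum of a set closed under `lcm`, hence a multiple of each member.
theorem uDivisors_gcud {n q : ℕ} (hn : n ≠ 0) (hq : q ≠ 0) :
    uDivisors (gcud n q) = uDivisors n ∩ uDivisors q := by
  obtain ⟨g, hg, hgcud⟩ := (uDivisors n ∩ uDivisors q).exists_mem_eq_sup
    ⟨1, mem_inter.2 ⟨one_mem_uDivisors hn, one_mem_uDivisors hq⟩⟩ id
  rw [mem_inter] at hg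
  rw [gcud, hgcud, id]
  ext e
  refine ⟨fun he => mem_inter.2 ⟨mem_uDivisors_trans he hg.1, mem_uDivisors_trans he hg.2⟩,
    fun he => ?_⟩
  rw [mem_inter] at he
  have hlcm : e.lcm g ∈ uDivisors n ∩ uDivisors q :=
    mem_inter.2 ⟨lcm_mem_uDivisors he.1 hg.1, lcm_mem_uDivisors he.2 hg.2⟩
  have hle : e.lcm g ≤ g := by simpa [hgcud] using le_sup (f := id) hlcm
  have heq : e.lcm g = g := le_antisymm hle
    (Nat.le_of_dvd (pos_of_mem_uDivisors (mem_inter.1 hlcm).1) (Nat.dvd_lcm_right e g))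
  exact mem_uDivisors_of_dvd (heq ▸ Nat.dvd_lcm_left e g) he.1 hg.1

theorem div_mem_uDivisors_div {e d q : ℕ} (he : e ∈ uDivisors d) (hd : d ∈ uDivisors q) :
    d / e ∈ uDivisors (q / e) := by
  obtain ⟨-, a, rfl, -⟩ := mem_uDivisors_iff_exists_mul.1 he
  obtain ⟨hq, b, rfl, hdb⟩ := mem_uDivisors_iff_exists_mul.1 hd
  have he0 := pos_of_mem_uDivisors he
  rw [mul_assoc] at hq ⊢
  rw [Nat.mul_div_cancel_left a he0, Nat.mul_div_cancel_left _ he0]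
  exact mem_uDivisors_mul (Nat.Coprime.coprime_mul_left hdb) (right_ne_zero_of_mul hq)

theorem mul_mem_uDivisors {e f q : ℕ} (he : e ∈ uDivisors q) (hf : f ∈ uDivisors (q / e)) :
    e * f ∈ uDivisors q := by
  obtain ⟨hq, a, rfl, hea⟩ := mem_uDivisors_iff_exists_mul.1 he
  rw [Nat.mul_div_cancel_left a (pos_of_mem_uDivisors he)] at hf
  obtain ⟨-, b, rfl, hfb⟩ := mem_uDivisors_iff_exists_mul.1 hf
  rw [← mul_assoc] at hq ⊢
  exact mem_uDivisors_mul ((Nat.Coprime.coprime_mul_left_right hea).mul_left hfb) hq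

theorem sum_uDivisors_sum_uDivisors_div {M : Type*} [AddCommMonoid M] (q : ℕ)
    (F : ℕ → ℕ → M) :
    ∑ d ∈ uDivisors q, ∑ e ∈ uDivisors d, F e (d / e) =
      ∑ e ∈ uDivisors q, ∑ f ∈ uDivisors (q / e), F e f := by
  rw [sum_sigma', sum_sigma']
  refine sum_bij' (fun x _ => ⟨x.2, x.1 / x.2⟩) (fun x _ => ⟨x.1 * x.2, x.1⟩) ?_ ?_ ?_ ?_ ?_
  · rintro ⟨d, e⟩ hx
    rw [mem_sigma] at hx ⊢
    exact ⟨mem_uDivisors_trans hx.2 hx.1, div_mem_uDivisors_div hx.2 hx.1⟩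
  · rintro ⟨e, f⟩ hx
    rw [mem_sigma] at hx ⊢
    have hef := mul_mem_uDivisors hx.1 hx.2
    exact ⟨hef, mem_uDivisors_of_dvd (dvd_mul_right e f) hx.1 hef⟩
  · rintro ⟨d, e⟩ hx
    rw [Nat.mul_div_cancel' (mem_uDivisors.1 (mem_sigma.1 hx).2).1]
  · rintro ⟨e, f⟩ hx
    rw [Nat.mul_div_cancel_left f (pos_of_mem_uDivisors (mem_sigma.1 hx).1)]
  · rintro ⟨d, e⟩ _
    rfl

/-- The part `∏_{p ∣ m, P p} p ^ vₚ(m)` of `m`. -/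
def primesPart (m : ℕ) (P : ℕ → Prop) [DecidablePred P] : ℕ :=
  (m.factorization.filter P).prod (· ^ ·)

section primesPart

variable (m : ℕ) (P : ℕ → Prop) [DecidablePred P]

theorem factorization_primesPart :
    (primesPart m P).factorization = m.factorization.filter P :=
  Nat.prod_pow_factorization_eq_self fun _ hp =>
    Nat.prime_of_mem_primeFactors (Nat.support_factorization m ▸ (mem_filter.1 hp).1)

theorem primeFactors_primesPart : (primesPart m P).primeFactors = {p ∈ m.primeFactors | P p} := by
  rw [← Nat.support_factorization, factorization_primesPart, Finsupp.support_filter,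
    Nat.support_factorization]

theorem primesPart_mul_primesPart_not (hm : m ≠ 0) :
    primesPart m P * primesPart m (fun p => ¬ P p) = m := by
  rw [primesPart, primesPart, Finsupp.prod_filter_mul_prod_filter_not,
    Nat.prod_factorization_pow_eq_self hm]

theorem primesPart_mem_uDivisors (hm : m ≠ 0) : primesPart m P ∈ uDivisors m := by
  have hmul := primesPart_mul_primesPart_not m P hm
  rw [← hmul] at hm
  suffices (primesPart m P).Coprime (primesPart m fun p => ¬P p) by
    simpa only [hmul] using mem_uDivisors_mul this hm
  rw [← Nat.disjoint_primeFactors (left_ne_zero_of_mul hm) (right_ne_zero_of_mul hm),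
    primeFactors_primesPart, primeFactors_primesPart]
  exact disjoint_filter_filter_not _ _ _

end primesPart

theorem primesPart_primeFactors_of_mem_uDivisors {f m : ℕ} (hf : f ∈ uDivisors m) :
    primesPart m (· ∈ f.primeFactors) = f := by
  obtain ⟨hm, b, rfl, hfb⟩ := mem_uDivisors_iff_exists_mul.1 hf
  refine Nat.eq_of_factorization_eq (pos_of_mem_uDivisors (primesPart_mem_uDivisors _ _ hm)).ne'
    (left_ne_zero_of_mul hm) fun p => ?_
  rw [factorization_primesPart, Finsupp.filter_apply,
    Nat.factorization_mul (left_ne_zero_of_mul hm) (right_ne_zero_of_mul hm), Finsupp.add_apply]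
  split_ifs with hp
  · have hpb : p ∉ b.primeFactors := disjoint_left.1 hfb.disjoint_primeFactors hp
    rw [← Nat.support_factorization, Finsupp.notMem_support_iff] at hpb
    rw [hpb, add_zero]
  · rw [← Nat.support_factorization, Finsupp.notMem_support_iff] at hp
    exact hp.symm

theorem sum_uDivisors_mustar (m : ℕ) :
    ∑ f ∈ uDivisors m, mustar f = if m = 1 then 1 else 0 := by
  rcases eq_or_ne m 0 with rfl | hm
  · simp [uDivisors]
  calc ∑ f ∈ uDivisors m, mustar f = ∑ S ∈ m.primeFactors.powerset, (-1 : ℤ) ^ S.card := by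
        refine sum_nbij' (·.primeFactors) (fun S => primesPart m (· ∈ S)) ?_ ?_ ?_ ?_ ?_
        · exact fun f hf => mem_powerset.2 (Nat.primeFactors_mono (mem_uDivisors.1 hf).1 hm)
        · exact fun S _ => primesPart_mem_uDivisors m _ hm
        · exact fun f hf => primesPart_primeFactors_of_mem_uDivisors hf
        · intro S hS
          rw [primeFactors_primesPart, filter_mem_eq_inter, inter_eq_right.2 (mem_powerset.1 hS)]
        · exact fun f _ => rfl
    _ = if m = 1 then 1 else 0 := by
        simp [sum_powerset_neg_one_pow_card, Nat.primeFactors_eq_empty, hm]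

theorem ctilde_eq_sum_uDivisors {d n : ℕ} (hd : d ≠ 0) (hn : n ≠ 0) :
    ctilde d n =
      ∑ e ∈ uDivisors d, (if e ∈ uDivisors n then (e : ℤ) else 0) * mustar (d / e) := by
  rw [ctilde, uDivisors_gcud hn hd, inter_comm, ← filter_mem_eq_inter, sum_filter]
  simp only [ite_mul, zero_mul]

theorem sum_uDivisors_mul_sum_mustar {q : ℕ} (hq : q ≠ 0) (g : ℕ → ℤ) :
    ∑ e ∈ uDivisors q, g e * ∑ f ∈ uDivisors (q / e), mustar f = g q := by
  rw [sum_eq_single_of_mem q (self_mem_uDivisors hq), Nat.div_self (Nat.pos_of_ne_zero hq),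
    sum_uDivisors_mustar, if_pos rfl, mul_one]
  intro e he hne
  have hqe : q / e ≠ 1 := by
    rw [Ne, Nat.div_eq_iff_eq_mul_left (pos_of_mem_uDivisors he) (mem_uDivisors.1 he).1,
      one_mul]
    exact Ne.symm hne
  rw [sum_uDivisors_mustar, if_neg hqe, mul_zero]

theorem sum_ctilde_over_unitary_divisors_general (q n : ℕ) (hn : 0 < n) :
    ∑ d ∈ uDivisors q, ctilde d n =
      if q ∣ n ∧ Nat.gcd q (n / q) = 1 then (q : ℤ) else 0 := by
  rcases eq_or_ne q 0 with rfl | hq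
  · simp [uDivisors, hn.ne']
  let g : ℕ → ℤ := fun e => if e ∈ uDivisors n then (e : ℤ) else 0
  calc ∑ d ∈ uDivisors q, ctilde d n
      = ∑ d ∈ uDivisors q, ∑ e ∈ uDivisors d, g e * mustar (d / e) :=
        sum_congr rfl fun d hd => ctilde_eq_sum_uDivisors (pos_of_mem_uDivisors hd).ne' hn.ne'
    _ = ∑ e ∈ uDivisors q, g e * ∑ f ∈ uDivisors (q / e), mustar f := by
        simp only [sum_uDivisors_sum_uDivisors_div q fun e f => g e * mustar f, mul_sum]
    _ = g q := sum_uDivisors_mul_sum_mustar hq g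
    _ = if q ∣ n ∧ Nat.gcd q (n / q) = 1 then (q : ℤ) else 0 :=
        if_congr (by simp [mem_uDivisors, Nat.coprime_iff_gcd_eq_one, hn.ne']) rfl rfl

theorem sum_ctilde_over_unitary_divisors (q n : ℕ) (hq : 0 < q) (hn : 0 < n) :
    ∑ d ∈ uDivisors q, ctilde d n =
      if q ∣ n ∧ Nat.gcd q (n / q) = 1 then (q : ℤ) else 0 :=
  sum_ctilde_over_unitary_divisors_general q n hn
end

section
/- For the classical Ramanujan sums c_q(n), for all q, n ≥ 1, Σ_{d ∣ q} |c_d(n)| = 2^{ω(q/gcd(n,q))} · gcd(n,q). -/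
/-- The classical Ramanujan sum c_q(n) = Σ_{d ∣ gcd(n,q)} d μ(q/d). -/
noncomputable def ramanujanSum (q n : ℕ) : ℤ :=
  ∑ d ∈ (Nat.gcd n q).divisors, (d : ℤ) * ArithmeticFunction.moebius (q / d)

/-! Both sides are multiplicative in `q`. On the left, `q ↦ c_q(n)` is the Dirichlet convolution
of `μ` with the identity restricted to the divisors of `n`, so it is multiplicative, and so are its
absolute value and the divisor sums of that. On the right, `gcd(n, ·)` is multiplicative and `ω`
is additive on coprime arguments.

For `q = p ^ k` write `gcd(n, p ^ k) = p ^ a`. Convolving with `μ` gives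
`c_{p^(j+1)}(n) = [p^(j+1) ∣ n] p^(j+1) - [p^j ∣ n] p^j`. Besides `|c_1(n)| = 1`, the terms
`|c_{p^(j+1)}(n)|` with `j < a` telescope to `p ^ a - 1`, the term `j = a` contributes `p ^ a`
exactly when `a < k`, and all later ones vanish. -/

open ArithmeticFunction Finset
open scoped ArithmeticFunction.Moebius ArithmeticFunction.zeta

namespace ArithmeticFunction

variable {R : Type*}

theorem mul_moebius_apply_prime_pow_succ [CommRing R] (f : ArithmeticFunction R) {p : ℕ}
    (hp : p.Prime) (k : ℕ) : (f * μ) (p ^ (k + 1)) = f (p ^ (k + 1)) - f (p ^ k) := by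
  rw [mul_comm, mul_apply,
    Nat.sum_divisorsAntidiagonal (fun x y => (μ : ArithmeticFunction R) x * f y),
    Nat.sum_divisors_prime_pow hp, sum_range_succ', sum_range_succ',
    sum_eq_zero fun i _ => by simp [intCoe_apply, moebius_apply_prime_pow hp]]
  simp [intCoe_apply, moebius_apply_prime hp, pow_succ, hp.pos, sub_eq_neg_add]

section Abs

variable [Ring R] [LinearOrder R] [IsOrderedRing R]

def abs (f : ArithmeticFunction R) : ArithmeticFunction R :=
  ⟨fun n => |f n|, by simp⟩

@[simp]
theorem abs_apply (f : ArithmeticFunction R) (n : ℕ) : f.abs n = |f n| := rfl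

theorem IsMultiplicative.abs {f : ArithmeticFunction R} (hf : f.IsMultiplicative) :
    f.abs.IsMultiplicative :=
  ⟨by simp [hf.map_one], fun h => by simp [hf.map_mul_of_coprime h, abs_mul]⟩

end Abs

def idOnDivisors [Semiring R] (n : ℕ) : ArithmeticFunction R :=
  ⟨fun d => if d ∣ n then (d : R) else 0, by simp⟩

theorem idOnDivisors_apply [Semiring R] (n d : ℕ) :
    idOnDivisors (R := R) n d = if d ∣ n then (d : R) else 0 := rfl

theorem isMultiplicative_idOnDivisors [Semiring R] (n : ℕ) :
    (idOnDivisors (R := R) n).IsMultiplicative := by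
  refine ⟨by simp [idOnDivisors_apply], fun {a b} hab => ?_⟩
  have hdvd : a * b ∣ n ↔ a ∣ n ∧ b ∣ n :=
    ⟨fun h => ⟨dvd_of_mul_right_dvd h, dvd_of_mul_left_dvd h⟩,
      fun h => hab.mul_dvd_of_dvd_of_dvd h.1 h.2⟩
  by_cases ha : a ∣ n <;> by_cases hb : b ∣ n <;> simp [idOnDivisors_apply, hdvd, ha, hb]

def ramanujan (n : ℕ) : ArithmeticFunction ℤ := idOnDivisors n * μ

theorem isMultiplicative_ramanujan (n : ℕ) : (ramanujan n).IsMultiplicative :=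
  (isMultiplicative_idOnDivisors n).mul isMultiplicative_moebius

theorem ramanujan_apply (n q : ℕ) : ramanujan n q = ramanujanSum q n := by
  rcases eq_or_ne q 0 with rfl | hq
  · simp [ramanujanSum]
  rw [ramanujan, mul_apply, Nat.sum_divisorsAntidiagonal (fun x y => idOnDivisors n x * μ y),
    ramanujanSum, ← Nat.divisors_filter_dvd_of_dvd hq (Nat.gcd_dvd_right n q), sum_filter]
  refine sum_congr rfl fun d hd => ?_
  simp [idOnDivisors_apply, Nat.dvd_gcd_iff, Nat.dvd_of_mem_divisors hd]

end ArithmeticFunction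

theorem ramanujanSum_one (n : ℕ) : ramanujanSum 1 n = 1 := by
  rw [← ramanujan_apply, (isMultiplicative_ramanujan n).map_one]

theorem ramanujanSum_prime_pow_succ {p : ℕ} (hp : p.Prime) (n k : ℕ) :
    ramanujanSum (p ^ (k + 1)) n = idOnDivisors n (p ^ (k + 1)) - idOnDivisors n (p ^ k) := by
  rw [← ramanujan_apply]
  exact mul_moebius_apply_prime_pow_succ _ hp k

theorem sum_abs_ramanujanSum_eq_abs_ramanujan_mul_zeta (n q : ℕ) :
    ∑ d ∈ q.divisors, |ramanujanSum d n| = ((ramanujan n).abs * ζ) q := by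
  simp only [coe_mul_zeta_apply, abs_apply, ramanujan_apply]

theorem sum_abs_ramanujanSum_prime_pow {p : ℕ} (hp : p.Prime) (n k : ℕ) :
    ∑ d ∈ (p ^ k).divisors, |ramanujanSum d n| =
      2 ^ (p ^ k / n.gcd (p ^ k)).primeFactors.card * (n.gcd (p ^ k) : ℤ) := by
  obtain ⟨a, hak, hg⟩ := (Nat.dvd_prime_pow hp).1 (Nat.gcd_dvd_right n (p ^ k))
  obtain ⟨m, rfl⟩ := Nat.exists_eq_add_of_le hak
  have hdvd : ∀ j ≤ a + m, p ^ j ∣ n ↔ j ≤ a := fun j hj => by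
    rw [← Nat.pow_dvd_pow_iff_le_right hp.one_lt, ← hg, Nat.dvd_gcd_iff,
      and_iff_left (Nat.pow_dvd_pow p hj)]
  have hbelow : ∀ j ∈ range a, |ramanujanSum (p ^ (j + 1)) n| = p ^ (j + 1) - p ^ j := by
    intro j hj
    rw [mem_range] at hj
    rw [ramanujanSum_prime_pow_succ hp, idOnDivisors_apply, idOnDivisors_apply,
      if_pos ((hdvd _ (by omega)).2 (by omega)), if_pos ((hdvd _ (by omega)).2 (by omega)),
      Nat.cast_pow, Nat.cast_pow,
      abs_of_nonneg (sub_nonneg.2 (pow_le_pow_right₀ (mod_cast hp.one_le) j.le_succ))]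
  have hedge : m ≠ 0 → |ramanujanSum (p ^ (a + 1)) n| = p ^ a := fun hm => by
    rw [ramanujanSum_prime_pow_succ hp, idOnDivisors_apply, idOnDivisors_apply,
      if_neg (mt (hdvd _ (by omega)).1 (by omega)), if_pos ((hdvd _ (by omega)).2 le_rfl)]
    simp
  have habove : ∀ j, a < j → j < a + m → |ramanujanSum (p ^ (j + 1)) n| = 0 := by
    intro j h1 h2
    rw [ramanujanSum_prime_pow_succ hp, idOnDivisors_apply, idOnDivisors_apply,
      if_neg (mt (hdvd _ (by omega)).1 (by omega)), if_neg (mt (hdvd _ (by omega)).1 (by omega))]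
    simp
  rw [Nat.sum_divisors_prime_pow hp, sum_range_succ', sum_range_add, sum_congr rfl hbelow,
    sum_range_sub (fun j => (p : ℤ) ^ j), pow_zero, pow_zero, ramanujanSum_one, hg,
    Nat.pow_div (by omega) hp.pos]
  rcases m with _ | m
  · simp
  · rw [sum_range_succ', sum_eq_zero fun j hj => habove _ (by omega) (by simp at hj; omega),
      add_zero, hedge (by omega), Nat.primeFactors_prime_pow (by omega) hp, card_singleton,
      abs_one]
    push_cast
    ring

theorem two_pow_card_primeFactors_div_gcd_mul_gcd_mul {a b : ℕ} (hab : a.Coprime b) (n : ℕ) :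
    (2 : ℤ) ^ (a * b / n.gcd (a * b)).primeFactors.card * n.gcd (a * b) =
      2 ^ (a / n.gcd a).primeFactors.card * n.gcd a *
        (2 ^ (b / n.gcd b).primeFactors.card * n.gcd b) := by
  have hga := Nat.gcd_dvd_right n a
  have hgb := Nat.gcd_dvd_right n b
  have hcop : (a / n.gcd a).Coprime (b / n.gcd b) :=
    (hab.coprime_dvd_left (Nat.div_dvd_of_dvd hga)).coprime_dvd_right (Nat.div_dvd_of_dvd hgb)
  rw [hab.gcd_mul n, ← Nat.div_mul_div_comm hga hgb, hcop.primeFactors_mul,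
    card_union_of_disjoint hcop.disjoint_primeFactors]
  push_cast
  ring

theorem sum_abs_ramanujanSum_general (q n : ℕ) (hq : 0 < q) :
    ∑ d ∈ q.divisors, |ramanujanSum d n| =
      2 ^ (q / Nat.gcd n q).primeFactors.card * (Nat.gcd n q : ℤ) := by
  have hlhs := (isMultiplicative_ramanujan n).abs.mul isMultiplicative_zeta.natCast
  have hrhs := Nat.multiplicative_factorization
    (fun q => (2 : ℤ) ^ (q / n.gcd q).primeFactors.card * n.gcd q)
    (fun _ _ hab => two_pow_card_primeFactors_div_gcd_mul_gcd_mul hab n) (by simp) hq.ne'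
  rw [sum_abs_ramanujanSum_eq_abs_ramanujan_mul_zeta, hlhs.multiplicative_factorization _ hq.ne',
    hrhs]
  refine Finsupp.prod_congr fun p hp => ?_
  rw [← sum_abs_ramanujanSum_eq_abs_ramanujan_mul_zeta,
    sum_abs_ramanujanSum_prime_pow (Nat.prime_of_mem_primeFactors hp)]

theorem sum_abs_ramanujanSum (q n : ℕ) (hq : 0 < q) (hn : 0 < n) :
    ∑ d ∈ q.divisors, |ramanujanSum d n| =
      2 ^ (q / Nat.gcd n q).primeFactors.card * (Nat.gcd n q : ℤ) :=
  sum_abs_ramanujanSum_general q n hq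
end

section
/- For every n ≥ 1, σ*(n)/n = ζ(2) Σ_{q=1}^∞ φ₂(q) c̃_q(n) / q⁴, where the series converges absolutely. -/
/-- σ*(n), the sum of unitary divisors of n. -/
def sigmaStar (n : ℕ) : ℕ := ∑ d ∈ uDivisors n, d

/-- The Jordan totient φ₂(q) = q² Π_{p ∣ q} (1 − 1/p²), as a complex number. -/
noncomputable def jordanTwo (q : ℕ) : ℂ :=
  (q : ℂ) ^ 2 * ∏ p ∈ q.primeFactors, (1 - 1 / (p : ℂ) ^ 2)

/-!
The summand `q ↦ φ₂(q) c̃_q(n) / q⁴` is multiplicative in `q`: for coprime `a`, `b` every common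
unitary divisor of `n` and `ab` splits as a product of one of `n` and `a` and one of `n` and `b`.
It is bounded by `σ*(n) / q²`, so the series is an absolutely convergent Euler product. If
`p^a ∥ n`, then `c̃_{p^k}(n)` is `p^k - 1` for `k = a` and `-1` otherwise, and summing a geometric
series gives the local factor `(1 - p⁻²) σ*(p^a) / p^a`. The factors `1 - p⁻²` cancel against
the Euler product of `ζ(2)`, and `∏_p σ*(p^a) / p^a = σ*(n) / n` by multiplicativity.
-/

open Finset

def UnitaryDvd (d n : ℕ) : Prop := ∃ k, n = d * k ∧ Nat.Coprime d k

namespace UnitaryDvd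

variable {a b d e m n : ℕ}

theorem dvd (h : UnitaryDvd d n) : d ∣ n :=
  let ⟨k, hk, _⟩ := h
  ⟨k, hk⟩

theorem one_left (n : ℕ) : UnitaryDvd 1 n := ⟨n, (one_mul n).symm, Nat.coprime_one_left n⟩

theorem refl (n : ℕ) : UnitaryDvd n n := ⟨1, (mul_one n).symm, Nat.coprime_one_right n⟩

theorem trans (hde : UnitaryDvd d e) (hen : UnitaryDvd e n) : UnitaryDvd d n := by
  obtain ⟨a, rfl, hda⟩ := hde
  obtain ⟨b, rfl, hdab⟩ := hen
  exact ⟨a * b, mul_assoc d a b, hda.mul_right (hdab.coprime_dvd_left (dvd_mul_right d a))⟩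

theorem mul_mul (hab : Nat.Coprime a b) (hd : UnitaryDvd d a) (he : UnitaryDvd e b) :
    UnitaryDvd (d * e) (a * b) := by
  obtain ⟨k, rfl, hdk⟩ := hd
  obtain ⟨l, rfl, hel⟩ := he
  refine ⟨k * l, by ring, ?_⟩
  have hdl : Nat.Coprime d l :=
    (hab.coprime_dvd_left (dvd_mul_right d k)).coprime_dvd_right (dvd_mul_left l e)
  have hek : Nat.Coprime e k :=
    (hab.symm.coprime_dvd_left (dvd_mul_right e l)).coprime_dvd_right (dvd_mul_left k d)
  exact Nat.Coprime.mul_left (hdk.mul_right hdl) (hek.mul_right hel)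

theorem coprime_of_eq_mul (h : UnitaryDvd d n) (hn : n ≠ 0) (hdm : d ∣ m) (hmk : n = m * k) :
    Nat.Coprime d k := by
  obtain ⟨j, rfl, hdj⟩ := h
  obtain ⟨i, rfl⟩ := hdm
  have hj : j = i * k := by
    rw [mul_assoc] at hmk
    exact Nat.eq_of_mul_eq_mul_left (Nat.pos_of_ne_zero (left_ne_zero_of_mul hn)) hmk
  exact hdj.coprime_dvd_right (hj ▸ dvd_mul_left k i)

theorem of_dvd_of_dvd (h : UnitaryDvd d n) (hn : n ≠ 0) (hdm : d ∣ m) (hmn : m ∣ n) :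
    UnitaryDvd d m := by
  obtain ⟨j, rfl⟩ := hdm
  obtain ⟨k, hk⟩ := hmn
  refine ⟨j, rfl, ?_⟩
  have hdjk := h.coprime_of_eq_mul hn dvd_rfl (show n = d * (j * k) by rw [hk, mul_assoc])
  exact hdjk.coprime_dvd_right (dvd_mul_right j k)

theorem lcm (hd : UnitaryDvd d n) (he : UnitaryDvd e n) (hn : n ≠ 0) :
    UnitaryDvd (Nat.lcm d e) n := by
  obtain ⟨k, hk⟩ := Nat.lcm_dvd hd.dvd he.dvd
  have hdk := hd.coprime_of_eq_mul hn (Nat.dvd_lcm_left d e) hk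
  have hek := he.coprime_of_eq_mul hn (Nat.dvd_lcm_right d e) hk
  exact ⟨k, hk, (Nat.Coprime.mul_left hdk hek).coprime_dvd_left (Nat.lcm_dvd_mul d e)⟩

theorem mul_of_coprime (hd : UnitaryDvd d n) (he : UnitaryDvd e n) (hn : n ≠ 0)
    (hde : Nat.Coprime d e) : UnitaryDvd (d * e) n :=
  hde.lcm_eq_mul ▸ hd.lcm he hn

theorem gcd_of_dvd_mul (hab : Nat.Coprime a b) (h : d ∣ a * b) : UnitaryDvd (Nat.gcd d a) d :=
  ⟨Nat.gcd d b, ((Nat.gcd_mul_gcd_eq_iff_dvd_mul_of_coprime hab).mpr h).symm,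
    (hab.coprime_dvd_left (Nat.gcd_dvd_right d a)).coprime_dvd_right (Nat.gcd_dvd_right d b)⟩

theorem gcd_left (hab : Nat.Coprime a b) (hab₀ : a * b ≠ 0) (h : UnitaryDvd d (a * b)) :
    UnitaryDvd (Nat.gcd d a) a := by
  obtain ⟨k, hk⟩ := Nat.gcd_dvd_right d a
  have hg : UnitaryDvd (Nat.gcd d a) (a * b) := (gcd_of_dvd_mul hab h.dvd).trans h
  have hgkb := hg.coprime_of_eq_mul hab₀ dvd_rfl (show a * b = d.gcd a * (k * b) by
    rw [← mul_assoc, ← hk])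
  exact ⟨k, hk, hgkb.coprime_dvd_right (dvd_mul_right k b)⟩

end UnitaryDvd

theorem mem_uDivisors_s12 {d n : ℕ} (hn : n ≠ 0) : d ∈ uDivisors n ↔ UnitaryDvd d n := by
  simp only [uDivisors, mem_filter, Nat.mem_divisors]
  constructor
  · rintro ⟨⟨hdn, -⟩, hcop⟩
    exact ⟨n / d, (Nat.mul_div_cancel' hdn).symm, hcop⟩
  · rintro ⟨k, rfl, hcop⟩
    have hd : d ≠ 0 := left_ne_zero_of_mul hn
    rw [Nat.mul_div_cancel_left k (Nat.pos_of_ne_zero hd)]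
    exact ⟨⟨dvd_mul_right d k, hn⟩, hcop⟩

theorem mem_uDivisors_inter {d n q : ℕ} (hn : n ≠ 0) (hq : q ≠ 0) :
    d ∈ uDivisors n ∩ uDivisors q ↔ UnitaryDvd d n ∧ UnitaryDvd d q := by
  rw [mem_inter, mem_uDivisors_s12 hn, mem_uDivisors_s12 hq]

theorem uDivisors_zero : uDivisors 0 = ∅ := rfl

theorem gcud_mem {n q : ℕ} (hn : n ≠ 0) (hq : q ≠ 0) :
    gcud n q ∈ uDivisors n ∩ uDivisors q := by
  have h1 : 1 ∈ uDivisors n ∩ uDivisors q :=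
    (mem_uDivisors_inter hn hq).mpr ⟨.one_left n, .one_left q⟩
  obtain ⟨g, hg, hsup⟩ := exists_mem_eq_sup _ ⟨1, h1⟩ id
  rwa [gcud, hsup]

theorem ctilde_eq_sum {n q : ℕ} (hn : n ≠ 0) (hq : q ≠ 0) :
    ctilde q n = ∑ d ∈ uDivisors n ∩ uDivisors q, (d : ℤ) * mustar (q / d) := by
  rw [ctilde, uDivisors_gcud hn hq]

/-- `d ↦ (gcd d a, gcd d b)` is a bijection, inverse to multiplication. -/
theorem sum_uDivisors_inter_mul {M : Type*} [AddCommMonoid M] {n a b : ℕ} (hn : n ≠ 0)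
    (hab₀ : a * b ≠ 0) (hab : Nat.Coprime a b) (F : ℕ → M) :
    ∑ d ∈ uDivisors n ∩ uDivisors (a * b), F d =
      ∑ x ∈ (uDivisors n ∩ uDivisors a) ×ˢ (uDivisors n ∩ uDivisors b), F (x.1 * x.2) := by
  have ha : a ≠ 0 := left_ne_zero_of_mul hab₀
  have hb : b ≠ 0 := right_ne_zero_of_mul hab₀
  have hba₀ : b * a ≠ 0 := mul_comm a b ▸ hab₀
  have hsplit {d : ℕ} (hd : d ∈ uDivisors n ∩ uDivisors (a * b)) :
      Nat.gcd d a * Nat.gcd d b = d :=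
    (Nat.gcd_mul_gcd_eq_iff_dvd_mul_of_coprime hab).mpr ((mem_uDivisors_inter hn hab₀).mp hd).2.dvd
  refine sum_nbij' (fun d => (Nat.gcd d a, Nat.gcd d b)) (fun x => x.1 * x.2) ?_ ?_ ?_ ?_ ?_
  · intro d hd
    rw [mem_uDivisors_inter hn hab₀] at hd
    rw [mem_product, mem_uDivisors_inter hn ha, mem_uDivisors_inter hn hb]
    have hba : UnitaryDvd d (b * a) := mul_comm a b ▸ hd.2
    exact ⟨⟨(UnitaryDvd.gcd_of_dvd_mul hab hd.2.dvd).trans hd.1, hd.2.gcd_left hab hab₀⟩,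
      ⟨(UnitaryDvd.gcd_of_dvd_mul hab.symm hba.dvd).trans hd.1, hba.gcd_left hab.symm hba₀⟩⟩
  · rintro ⟨d, e⟩ hde
    rw [mem_product, mem_uDivisors_inter hn ha, mem_uDivisors_inter hn hb] at hde
    obtain ⟨⟨hdn, hda⟩, hen, heb⟩ := hde
    rw [mem_uDivisors_inter hn hab₀]
    exact ⟨hdn.mul_of_coprime hen hn (hab.of_dvd hda.dvd heb.dvd), hda.mul_mul hab heb⟩
  · intro d hd
    exact hsplit hd
  · rintro ⟨d, e⟩ hde
    rw [mem_product, mem_uDivisors_inter hn ha, mem_uDivisors_inter hn hb] at hde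
    have hda : d ∣ a := hde.1.2.dvd
    have heb : e ∣ b := hde.2.2.dvd
    have hgcd_a : Nat.gcd (d * e) a = d := by
      rw [Nat.Coprime.gcd_mul_right_cancel d (hab.symm.of_dvd_left heb), Nat.gcd_eq_left hda]
    have hgcd_b : Nat.gcd (d * e) b = e := by
      rw [Nat.Coprime.gcd_mul_left_cancel e (hab.of_dvd_left hda), Nat.gcd_eq_left heb]
    simp only [hgcd_a, hgcd_b]
  · intro d hd
    simp only [hsplit hd]

theorem uDivisors_one : uDivisors 1 = {1} := by decide

theorem mustar_one : mustar 1 = 1 := by simp [mustar]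

theorem mustar_mul {a b : ℕ} (hab : Nat.Coprime a b) :
    mustar (a * b) = mustar a * mustar b := by
  rw [mustar, mustar, mustar, hab.primeFactors_mul,
    card_union_of_disjoint hab.disjoint_primeFactors, pow_add]

theorem jordanTwo_mul {a b : ℕ} (hab : Nat.Coprime a b) :
    jordanTwo (a * b) = jordanTwo a * jordanTwo b := by
  rw [jordanTwo, jordanTwo, jordanTwo, hab.primeFactors_mul,
    prod_union hab.disjoint_primeFactors]
  push_cast
  ring

theorem ctilde_zero (n : ℕ) : ctilde 0 n = 0 := by
  simp [ctilde, gcud, uDivisors_zero]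

theorem ctilde_one {n : ℕ} (hn : n ≠ 0) : ctilde 1 n = 1 := by
  have h1 : uDivisors n ∩ uDivisors 1 = {1} := by
    rw [uDivisors_one, inter_singleton_of_mem ((mem_uDivisors_s12 hn).mpr (.one_left n))]
  simp [ctilde_eq_sum hn one_ne_zero, h1, mustar_one]

theorem ctilde_mul {n a b : ℕ} (hn : n ≠ 0) (hab₀ : a * b ≠ 0) (hab : Nat.Coprime a b) :
    ctilde (a * b) n = ctilde a n * ctilde b n := by
  have ha : a ≠ 0 := left_ne_zero_of_mul hab₀
  have hb : b ≠ 0 := right_ne_zero_of_mul hab₀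
  rw [ctilde_eq_sum hn hab₀, sum_uDivisors_inter_mul hn hab₀ hab, ctilde_eq_sum hn ha,
    ctilde_eq_sum hn hb, sum_mul_sum, sum_product]
  refine sum_congr rfl fun d hd => sum_congr rfl fun e he => ?_
  have hda : d ∣ a := ((mem_uDivisors_inter hn ha).mp hd).2.dvd
  have heb : e ∣ b := ((mem_uDivisors_inter hn hb).mp he).2.dvd
  have hquot : a * b / (d * e) = a / d * (b / e) := (Nat.div_mul_div_comm hda heb).symm
  rw [hquot, mustar_mul (hab.of_dvd (Nat.div_dvd_of_dvd hda) (Nat.div_dvd_of_dvd heb))]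
  push_cast
  ring

theorem sigmaStar_zero : sigmaStar 0 = 0 := rfl

theorem sigmaStar_one : sigmaStar 1 = 1 := by simp [sigmaStar, uDivisors_one]

theorem sigmaStar_mul {a b : ℕ} (hab₀ : a * b ≠ 0) (hab : Nat.Coprime a b) :
    sigmaStar (a * b) = sigmaStar a * sigmaStar b := by
  have inter_of_unitaryDvd {c : ℕ} (hc : UnitaryDvd c (a * b)) :
      uDivisors (a * b) ∩ uDivisors c = uDivisors c := by
    refine inter_eq_right.mpr fun d hd => ?_
    have hc₀ : c ≠ 0 := ne_zero_of_dvd_ne_zero hab₀ hc.dvd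
    exact (mem_uDivisors_s12 hab₀).mpr (((mem_uDivisors_s12 hc₀).mp hd).trans hc)
  have ha : UnitaryDvd a (a * b) := ⟨b, rfl, hab⟩
  have hb : UnitaryDvd b (a * b) := ⟨a, mul_comm a b, hab.symm⟩
  rw [sigmaStar, ← inter_self (uDivisors (a * b)), sum_uDivisors_inter_mul hab₀ hab₀ hab,
    inter_of_unitaryDvd ha, inter_of_unitaryDvd hb, sigmaStar, sigmaStar, sum_mul_sum,
    sum_product]

open ArithmeticFunction

def sigmaStarFun : ArithmeticFunction ℕ := ⟨sigmaStar, sigmaStar_zero⟩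

noncomputable def jordanTwoFun : ArithmeticFunction ℂ := ⟨jordanTwo, by simp [jordanTwo]⟩

theorem sigmaStarFun_apply (n : ℕ) : sigmaStarFun n = sigmaStar n := rfl

def ctildeFun (n : ℕ) : ArithmeticFunction ℤ := ⟨fun q => ctilde q n, ctilde_zero n⟩

theorem isMultiplicative_sigmaStarFun : sigmaStarFun.IsMultiplicative :=
  IsMultiplicative.iff_ne_zero.mpr
    ⟨sigmaStar_one, fun ha hb hab => sigmaStar_mul (mul_ne_zero ha hb) hab⟩

theorem isMultiplicative_jordanTwoFun : jordanTwoFun.IsMultiplicative :=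
  ⟨by simp [jordanTwoFun, jordanTwo], jordanTwo_mul⟩

theorem isMultiplicative_ctildeFun {n : ℕ} (hn : n ≠ 0) : (ctildeFun n).IsMultiplicative :=
  IsMultiplicative.iff_ne_zero.mpr
    ⟨ctilde_one hn, fun ha hb hab => ctilde_mul hn (mul_ne_zero ha hb) hab⟩

noncomputable def expansionTerm (n : ℕ) : ArithmeticFunction ℂ :=
  (jordanTwoFun.pmul (ctildeFun n : ArithmeticFunction ℂ)).pdiv (pow 4 : ArithmeticFunction ℂ)

theorem expansionTerm_apply (n q : ℕ) :
    expansionTerm n q = jordanTwo q * ctilde q n / (q : ℂ) ^ 4 := by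
  simp [expansionTerm, pmul_apply, pdiv_apply, intCoe_apply, natCoe_apply, pow_apply]
  rfl

theorem isMultiplicative_expansionTerm {n : ℕ} (hn : n ≠ 0) :
    (expansionTerm n).IsMultiplicative :=
  (isMultiplicative_jordanTwoFun.pmul (isMultiplicative_ctildeFun hn).intCast).pdiv
    isMultiplicative_pow.natCast

theorem unitaryDvd_prime_pow_iff {p a n : ℕ} (hp : p.Prime) (ha : a ≠ 0) (hn : n ≠ 0) :
    UnitaryDvd (p ^ a) n ↔ n.factorization p = a := by
  constructor
  · rintro ⟨k, rfl, hcop⟩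
    have hpk : ¬ p ∣ k :=
      (Nat.Prime.coprime_iff_not_dvd hp).mp (hcop.coprime_dvd_left (dvd_pow_self p ha))
    rw [Nat.factorization_mul_apply_of_coprime hcop, hp.factorization_pow, Finsupp.single_eq_same,
      Nat.factorization_eq_zero_of_not_dvd hpk, add_zero]
  · rintro rfl
    exact ⟨_, (Nat.ordProj_mul_ordCompl_eq_self n p).symm, (Nat.coprime_ordCompl hp hn).pow_left _⟩

theorem uDivisors_prime_pow {p : ℕ} (hp : p.Prime) (a : ℕ) :
    uDivisors (p ^ a) = {1, p ^ a} := by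
  have hpa : p ^ a ≠ 0 := pow_ne_zero a hp.ne_zero
  ext d
  rw [mem_uDivisors_s12 hpa, mem_insert, mem_singleton]
  refine ⟨fun hd => ?_, ?_⟩
  · obtain ⟨i, -, rfl⟩ := (Nat.dvd_prime_pow hp).mp hd.dvd
    rcases eq_or_ne i 0 with rfl | hi
    · exact .inl (pow_zero p)
    · rw [unitaryDvd_prime_pow_iff hp hi hpa, hp.factorization_pow, Finsupp.single_eq_same] at hd
      exact .inr (hd ▸ rfl)
  · rintro (rfl | rfl)
    exacts [.one_left _, .refl _]

theorem mustar_prime_pow {p a : ℕ} (hp : p.Prime) (ha : a ≠ 0) : mustar (p ^ a) = -1 := by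
  simp [mustar, Nat.primeFactors_pow p ha, hp.primeFactors]

theorem ctilde_prime_pow {p a n : ℕ} (hp : p.Prime) (ha : a ≠ 0) (hn : n ≠ 0) :
    ctilde (p ^ a) n = (if n.factorization p = a then (p : ℤ) ^ a else 0) - 1 := by
  have hpa : p ^ a ≠ 0 := pow_ne_zero a hp.ne_zero
  have hpa₁ : p ^ a ≠ 1 := (Nat.one_lt_pow ha hp.one_lt).ne'
  rw [ctilde_eq_sum hn hpa, uDivisors_prime_pow hp a,
    inter_insert_of_mem ((mem_uDivisors_s12 hn).mpr (.one_left n)),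
    sum_insert (by simp [hpa₁.symm])]
  simp only [inter_singleton, mem_uDivisors_s12 hn, unitaryDvd_prime_pow_iff hp ha hn]
  split_ifs
  · simp [Nat.div_self (Nat.pos_of_ne_zero hpa), mustar_prime_pow hp ha, mustar_one]
    ring
  · simp [mustar_prime_pow hp ha]

theorem jordanTwo_prime_pow {p a : ℕ} (hp : p.Prime) (ha : a ≠ 0) :
    jordanTwo (p ^ a) = (p : ℂ) ^ (2 * a) * (1 - 1 / (p : ℂ) ^ 2) := by
  rw [jordanTwo, Nat.primeFactors_pow p ha, hp.primeFactors, prod_singleton]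
  push_cast
  ring

theorem sigmaStar_prime_pow {p a : ℕ} (hp : p.Prime) (ha : a ≠ 0) :
    sigmaStar (p ^ a) = 1 + p ^ a := by
  rw [sigmaStar, uDivisors_prime_pow hp a,
    sum_insert (by simpa using (Nat.one_lt_pow ha hp.one_lt).ne), sum_singleton]

theorem abs_ctilde_le_sigmaStar {n : ℕ} (hn : n ≠ 0) (q : ℕ) : |ctilde q n| ≤ sigmaStar n := by
  rcases eq_or_ne q 0 with rfl | hq
  · simp [ctilde_zero]
  rw [ctilde_eq_sum hn hq, sigmaStar, Nat.cast_sum]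
  calc |∑ d ∈ uDivisors n ∩ uDivisors q, (d : ℤ) * mustar (q / d)|
      ≤ ∑ d ∈ uDivisors n ∩ uDivisors q, |(d : ℤ) * mustar (q / d)| := abs_sum_le_sum_abs _ _
    _ = ∑ d ∈ uDivisors n ∩ uDivisors q, (d : ℤ) :=
      sum_congr rfl fun d _ => by simp [mustar, abs_mul]
    _ ≤ ∑ d ∈ uDivisors n, (d : ℤ) :=
      sum_le_sum_of_subset_of_nonneg inter_subset_left fun _ _ _ => by positivity

theorem norm_one_sub_one_div_sq_le_one {p : ℕ} (hp : p ≠ 0) : ‖1 - 1 / (p : ℂ) ^ 2‖ ≤ 1 := by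
  have hreal : 1 - 1 / (p : ℂ) ^ 2 = ((1 - 1 / (p : ℝ) ^ 2 : ℝ) : ℂ) := by push_cast; rfl
  have hle : 1 / (p : ℝ) ^ 2 ≤ 1 :=
    div_le_one_of_le₀ (one_le_pow₀ (by exact_mod_cast Nat.one_le_iff_ne_zero.mpr hp))
      (by positivity)
  have hnonneg : 0 ≤ 1 / (p : ℝ) ^ 2 := by positivity
  rw [hreal, Complex.norm_real, Real.norm_eq_abs, abs_le]
  constructor <;> linarith

theorem norm_jordanTwo_le (q : ℕ) : ‖jordanTwo q‖ ≤ (q : ℝ) ^ 2 := by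
  rw [jordanTwo, norm_mul, norm_pow, Complex.norm_natCast, norm_prod]
  exact mul_le_of_le_one_right (by positivity) (prod_le_one (fun _ _ => norm_nonneg _)
    fun p hp => norm_one_sub_one_div_sq_le_one (Nat.prime_of_mem_primeFactors hp).ne_zero)

theorem norm_expansionTerm_le {n : ℕ} (hn : n ≠ 0) (q : ℕ) :
    ‖expansionTerm n q‖ ≤ sigmaStar n * (1 / (q : ℝ) ^ 2) := by
  rcases eq_or_ne q 0 with rfl | hq
  · simp
  have hctilde : ‖(ctilde q n : ℂ)‖ ≤ sigmaStar n := by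
    rw [Complex.norm_intCast]
    exact_mod_cast abs_ctilde_le_sigmaStar hn q
  rw [expansionTerm_apply, norm_div, norm_mul, norm_pow, Complex.norm_natCast]
  calc ‖jordanTwo q‖ * ‖(ctilde q n : ℂ)‖ / (q : ℝ) ^ 4
      ≤ (q : ℝ) ^ 2 * sigmaStar n / (q : ℝ) ^ 4 := by
        gcongr
        exact norm_jordanTwo_le q
    _ = sigmaStar n * (1 / (q : ℝ) ^ 2) := by field_simp

theorem summable_norm_expansionTerm {n : ℕ} (hn : n ≠ 0) :
    Summable fun q => ‖expansionTerm n q‖ :=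
  .of_nonneg_of_le (fun _ => norm_nonneg _) (norm_expansionTerm_le hn)
    ((Real.summable_one_div_nat_pow.mpr one_lt_two).mul_left _)

theorem expansionTerm_prime_pow_succ {n p : ℕ} (hn : n ≠ 0) (hp : p.Prime) (e : ℕ) :
    expansionTerm n (p ^ (e + 1)) = (1 - 1 / (p : ℂ) ^ 2) *
      ((if e + 1 = n.factorization p then 1 / (p : ℂ) ^ n.factorization p else 0) -
        (1 / (p : ℂ) ^ 2) ^ (e + 1)) := by
  have hu : (1 / (p : ℂ) ^ 2) ^ (e + 1) = 1 / ((p : ℂ) ^ (e + 1)) ^ 2 := by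
    rw [div_pow, one_pow, ← pow_mul, ← pow_mul, mul_comm]
  rw [expansionTerm_apply, jordanTwo_prime_pow hp e.succ_ne_zero,
    ctilde_prime_pow hp e.succ_ne_zero hn, hu, pow_mul']
  by_cases he : n.factorization p = e + 1
  · rw [if_pos he, if_pos he.symm, he]
    push_cast
    field_simp
  · rw [if_neg he, if_neg (Ne.symm he)]
    push_cast
    field_simp
    ring

theorem norm_one_div_sq_lt_one {p : ℕ} (hp : 1 < p) : ‖1 / (p : ℂ) ^ 2‖ < 1 := by
  have hp' : (1 : ℝ) < p := by exact_mod_cast hp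
  rw [norm_div, norm_one, norm_pow, Complex.norm_natCast]
  exact (div_lt_one (by positivity)).mpr (one_lt_pow₀ hp' two_ne_zero)

theorem one_sub_one_div_sq_ne_zero {p : ℕ} (hp : 1 < p) : 1 - 1 / (p : ℂ) ^ 2 ≠ 0 :=
  sub_ne_zero.mpr fun h => by simpa [← h] using norm_one_div_sq_lt_one hp

theorem hasSum_expansionTerm_prime_pow {n p : ℕ} (hn : n ≠ 0) (hp : p.Prime) :
    HasSum (fun e => expansionTerm n (p ^ e)) ((1 - 1 / (p : ℂ) ^ 2) *
      (sigmaStar (p ^ n.factorization p) / (p : ℂ) ^ n.factorization p)) := by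
  have hp₀ : (p : ℂ) ≠ 0 := Nat.cast_ne_zero.mpr hp.ne_zero
  have hu₁ := one_sub_one_div_sq_ne_zero hp.one_lt
  have hgeom := (hasSum_geometric_of_norm_lt_one (norm_one_div_sq_lt_one hp.one_lt)).mul_left
    (1 / (p : ℂ) ^ 2)
  simp only [← pow_succ'] at hgeom
  refine (hasSum_nat_add_iff' 1).mp ?_
  simp only [expansionTerm_prime_pow_succ hn hp, sum_range_one, pow_zero,
    (isMultiplicative_expansionTerm hn).map_one]
  generalize 1 / (p : ℂ) ^ 2 = u at hu₁ hgeom ⊢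
  obtain hv | ⟨m, hv⟩ : n.factorization p = 0 ∨ ∃ m, n.factorization p = m + 1 :=
    (Nat.eq_zero_or_eq_succ_pred _).imp id fun h => ⟨_, h⟩
  · rw [hv, pow_zero, pow_zero, sigmaStar_one,
      show (1 - u) * ((1 : ℕ) / 1) - 1 = (1 - u) * (0 - u * (1 - u)⁻¹) by field_simp; ring]
    refine (HasSum.sub ?_ hgeom).mul_left _
    simp only [Nat.add_one_ne_zero, if_false, hasSum_zero]
  · rw [hv, sigmaStar_prime_pow hp m.succ_ne_zero, show (1 - u) * (((1 + p ^ (m + 1) : ℕ) : ℂ) /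
      (p : ℂ) ^ (m + 1)) - 1 = (1 - u) * (1 / (p : ℂ) ^ (m + 1) - u * (1 - u)⁻¹) by
        push_cast; field_simp; ring]
    refine (HasSum.sub ?_ hgeom).mul_left _
    simpa only [add_left_inj] using hasSum_ite_eq m (1 / (p : ℂ) ^ (m + 1))

theorem ArithmeticFunction.IsMultiplicative.hasProd_primes_pow_factorization {R : Type*}
    [CommMonoidWithZero R] [TopologicalSpace R] {f : ArithmeticFunction R}
    (hf : f.IsMultiplicative) {n : ℕ} (hn : n ≠ 0) :
    HasProd (fun p : Nat.Primes => f ((p : ℕ) ^ n.factorization p)) (f n) := by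
  let s : Finset Nat.Primes := n.primeFactors.subtype Nat.Prime
  have hsupp (p : Nat.Primes) (hp : p ∉ s) : f ((p : ℕ) ^ n.factorization p) = 1 := by
    have hp' : (p : ℕ) ∉ n.primeFactors := fun h => hp (mem_subtype.mpr h)
    rw [← Nat.support_factorization, Finsupp.notMem_support_iff] at hp'
    rw [hp', pow_zero, hf.map_one]
  have hprod : ∏ p ∈ s, f ((p : ℕ) ^ n.factorization p) = f n := by
    rw [multiplicative_factorization f hf hn, Finsupp.prod, Nat.support_factorization]
    exact prod_subtype_of_mem (p := Nat.Prime) (fun p => f (p ^ n.factorization p))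
      fun p hp => Nat.prime_of_mem_primeFactors hp
  exact hprod ▸ hasProd_prod_of_ne_finset_one hsupp

theorem sigmaStar_div_eq_riemannZeta_two_mul_tsum {n : ℕ} (hn : n ≠ 0) :
    (sigmaStar n : ℂ) / n = riemannZeta 2 * ∑' q, expansionTerm n q := by
  have hEuler := (isMultiplicative_expansionTerm hn).eulerProduct_hasProd
    (summable_norm_expansionTerm hn)
  have hzeta : HasProd (fun p : Nat.Primes => (1 - 1 / (p : ℂ) ^ 2)⁻¹) (riemannZeta 2) := by
    simpa [Complex.cpow_neg] using riemannZeta_eulerProduct_hasProd (s := 2) (by norm_num)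
  have hlocal (p : Nat.Primes) : (1 - 1 / (p : ℂ) ^ 2)⁻¹ * ∑' e, expansionTerm n (p ^ e) =
      sigmaStar ((p : ℕ) ^ n.factorization p) / (p : ℂ) ^ n.factorization p := by
    rw [(hasSum_expansionTerm_prime_pow hn p.prop).tsum_eq,
      inv_mul_cancel_left₀ (one_sub_one_div_sq_ne_zero p.prop.one_lt)]
  have hratio :
      ((sigmaStarFun : ArithmeticFunction ℂ).pdiv ArithmeticFunction.id).IsMultiplicative :=
    isMultiplicative_sigmaStarFun.natCast.pdiv isMultiplicative_id.natCast
  have hprod := hratio.hasProd_primes_pow_factorization hn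
  simp only [pdiv_apply, natCoe_apply, id_apply, sigmaStarFun_apply, Nat.cast_pow] at hprod
  exact hprod.unique (by simpa only [hlocal] using hzeta.mul hEuler)

theorem sigmaStar_expansion (n : ℕ) (hn : 0 < n) :
    Summable (fun q : ℕ =>
      ‖jordanTwo (q + 1) * (ctilde (q + 1) n : ℂ) / ((q : ℂ) + 1) ^ 4‖) ∧
      (sigmaStar n : ℂ) / (n : ℂ) =
        riemannZeta 2 *
          ∑' q : ℕ, jordanTwo (q + 1) * (ctilde (q + 1) n : ℂ) / ((q : ℂ) + 1) ^ 4 := by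
  have hterm (q : ℕ) : jordanTwo (q + 1) * (ctilde (q + 1) n : ℂ) / ((q : ℂ) + 1) ^ 4 =
      expansionTerm n (q + 1) := by
    rw [expansionTerm_apply]
    push_cast
    rfl
  have hsum := summable_norm_expansionTerm hn.ne'
  simp only [hterm]
  refine ⟨hsum.comp_injective (add_left_injective 1), ?_⟩
  rw [sigmaStar_div_eq_riemannZeta_two_mul_tsum hn.ne', hsum.of_norm.tsum_eq_zero_add,
    ArithmeticFunction.map_zero, zero_add]
end
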